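/- arXiv:2309.02649 — 8 statements merged into one kernel-verified Lean document; each statement's English description precedes it below -/
import Mathlib

section
/- Let G = (V,E) be a finite simple graph with leader set V_ℓ = {ℓ_1,…,ℓ_m} ⊆ V. Then for every matrix M ∈ M(G), the controllability matrix C(M,H) satisfies rank(C(M,H)) ≥ ζ(G,V_ℓ), where ζ(G,V_ℓ) is the size of the zero-forcing derived set of G with initial black set V_ℓ. In particular, the dimension of the strong structurally controllable subspace γ(G,V_ℓ) = min_{M ∈ M(G)} rank(C(M,H)) satisfies ζ(G,V_ℓ) ≤ γ(G,V_ℓ). -/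
open Matrix

variable {V : Type*}

def MatFamily [Fintype V] (G : SimpleGraph V) : Set (Matrix V V ℝ) :=
  {M | M.IsSymm ∧ ∀ i j : V, i ≠ j → (M i j ≠ 0 ↔ G.Adj i j)}

def inputMatrix [DecidableEq V] {m : ℕ} (ℓ : Fin m → V) : Matrix V (Fin m) ℝ :=
  Matrix.of fun i j => if i = ℓ j then (1 : ℝ) else 0

noncomputable def ctrbMatrix [Fintype V] [DecidableEq V] {m : ℕ} (M : Matrix V V ℝ)
    (H : Matrix V (Fin m) ℝ) : Matrix V (Fin (Fintype.card V) × Fin m) ℝ :=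
  Matrix.of fun i p => (M ^ (p.1 : ℕ) * H) i p.2

inductive ZFDerived (G : SimpleGraph V) (S : Set V) : V → Prop
  | init {v : V} : v ∈ S → ZFDerived G S v
  | force {u v : V} : ZFDerived G S v → G.Adj v u →
      (∀ w : V, G.Adj v w → w ≠ u → ZFDerived G S w) → ZFDerived G S u

def dset (G : SimpleGraph V) (S : Set V) : Set V := {v | ZFDerived G S v}

noncomputable def zeta (G : SimpleGraph V) (S : Set V) : ℕ := (dset G S).ncard

def IsPMI {m : ℕ} (G : SimpleGraph V) (ℓ : Fin m → V) {k : ℕ}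
    (v : Fin k → V) (π : Fin k → Fin m) : Prop :=
  ∀ i : Fin k, G.edist (ℓ (π i)) (v i) ≠ ⊤ ∧
    ∀ j : Fin k, i < j → G.edist (ℓ (π i)) (v i) < G.edist (ℓ (π i)) (v j)

noncomputable def deltaPMI {m : ℕ} (G : SimpleGraph V) (ℓ : Fin m → V) : ℕ :=
  sSup {k : ℕ | ∃ (v : Fin k → V) (π : Fin k → Fin m), IsPMI G ℓ v π}

noncomputable def gammaSSC [Fintype V] [DecidableEq V] {m : ℕ} (G : SimpleGraph V)
    (ℓ : Fin m → V) : ℕ :=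
  sInf {r : ℕ | ∃ M ∈ MatFamily G, r = (ctrbMatrix M (inputMatrix ℓ)).rank}

def IsZFSBackbone (G : SimpleGraph V) (Vl : Set V) (EB : Set (Sym2 V)) : Prop :=
  EB ⊆ G.edgeSet ∧
    ∀ Gh : SimpleGraph V, Gh ≤ G → EB ⊆ Gh.edgeSet → zeta G Vl ≤ zeta Gh Vl

def IsDistBackbone {m : ℕ} (G : SimpleGraph V) (ℓ : Fin m → V) (EB : Set (Sym2 V)) : Prop :=
  EB ⊆ G.edgeSet ∧
    ∀ Gh : SimpleGraph V, Gh ≤ G → EB ⊆ Gh.edgeSet → deltaPMI G ℓ ≤ deltaPMI Gh ℓ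


section ZFProof

variable [Fintype V] [DecidableEq V] {m : ℕ}

lemma vecMul_sum_aux {m : ℕ} {ι : Type*} (s : Finset ι) (x : V → ℝ)
    (B : ι → Matrix V (Fin m) ℝ) :
    x ᵥ* (∑ i ∈ s, B i) = ∑ i ∈ s, x ᵥ* (B i) := by
  induction s using Finset.cons_induction with
  | empty => simp
  | cons a s ha ih => simp [Finset.sum_cons, Matrix.vecMul_add, ih]

lemma vecMul_smul_mat {m : ℕ} (c : ℝ) (x : V → ℝ) (B : Matrix V (Fin m) ℝ) :
    x ᵥ* (c • B) = c • (x ᵥ* B) := by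
  funext j
  simp only [Matrix.vecMul, dotProduct, Matrix.smul_apply, Pi.smul_apply,
    smul_eq_mul, Finset.mul_sum]
  exact Finset.sum_congr rfl fun w _ => by ring

/-- Any vector annihilating all `x ᵥ* (M ^ k * H)` vanishes on the derived set. -/
lemma zf_vanish (G : SimpleGraph V) (ℓ : Fin m → V) (M : Matrix V V ℝ)
    (hM : M ∈ MatFamily G) {u : V} (hu : ZFDerived G (Set.range ℓ) u) :
    ∀ x : V → ℝ, (∀ k : ℕ, x ᵥ* (M ^ k * inputMatrix ℓ) = 0) → x u = 0 := by
  induction hu with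
  | @init v hv =>
      intro x hx
      obtain ⟨j, rfl⟩ := hv
      have h0 := congrFun (hx 0) j
      simp only [pow_zero, Matrix.one_mul, Matrix.vecMul, dotProduct,
        inputMatrix, Matrix.of_apply, mul_ite, mul_one, mul_zero,
        Finset.sum_ite_eq', Finset.mem_univ, if_true, Pi.zero_apply] at h0
      exact h0
  | @force u v hv hadj hall ihv ihall =>
      intro x hx
      have hyN : ∀ k : ℕ, (x ᵥ* M) ᵥ* (M ^ k * inputMatrix ℓ) = 0 := by
        intro k
        rw [Matrix.vecMul_vecMul, ← Matrix.mul_assoc, ← pow_succ']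
        exact hx (k + 1)
      have hyv : (x ᵥ* M) v = 0 := ihv _ hyN
      have key : ∀ w : V, x w * M w v = if w = u then x u * M u v else 0 := by
        intro w
        by_cases hw : w = u
        · subst hw; simp
        · rw [if_neg hw]
          by_cases hwv : w = v
          · subst hwv; rw [ihv x hx]; ring
          · by_cases hadjw : G.Adj v w
            · rw [ihall w hadjw hw x hx]; ring
            · have hM0 : M w v = 0 := by
                by_contra h
                exact hadjw (((hM.2 w v hwv).mp h).symm)
              rw [hM0]; ring
      have hsum : (x ᵥ* M) v = x u * M u v := by
        simp only [Matrix.vecMul, dotProduct]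
        rw [Finset.sum_congr rfl fun w _ => key w]
        simp
      have hMuv : M u v ≠ 0 := (hM.2 u v hadj.ne').mpr hadj.symm
      have := hsum.symm.trans hyv
      exact (mul_eq_zero.mp this).resolve_right hMuv

lemma ker_vanish_all (M : Matrix V V ℝ) (H : Matrix V (Fin m) ℝ) (x : V → ℝ)
    (hx : (ctrbMatrix M H)ᵀ *ᵥ x = 0) (k : ℕ) : x ᵥ* (M ^ k * H) = 0 := by
  have hlt : ∀ i : ℕ, i < Fintype.card V → x ᵥ* (M ^ i * H) = 0 := by
    intro i hi
    funext j
    have := congrFun hx (⟨i, hi⟩, j)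
    simpa [ctrbMatrix, Matrix.mulVec_transpose, Matrix.vecMul, dotProduct,
      Matrix.mul_apply] using this
  by_cases hn : Fintype.card V = 0
  · haveI : IsEmpty V := Fintype.card_eq_zero_iff.mp hn
    funext j
    simp [Matrix.vecMul, dotProduct]
  · by_cases hk : k < Fintype.card V
    · exact hlt k hk
    · have hpow := Matrix.pow_eq_aeval_mod_charpoly M k
      set r := (Polynomial.X ^ k %ₘ M.charpoly : Polynomial ℝ) with hr
      have hdeg : r.natDegree < Fintype.card V := by
        have h2 : M.charpoly.degree = (Fintype.card V : ℕ) := by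
          rw [← Matrix.charpoly_natDegree_eq_dim M]
          exact Polynomial.degree_eq_natDegree (Matrix.charpoly_monic M).ne_zero
        have h1 : r.degree < (Fintype.card V : ℕ) :=
          h2 ▸ Polynomial.degree_modByMonic_lt _ (Matrix.charpoly_monic M)
        rcases eq_or_ne r 0 with h | h
        · simpa [h] using Nat.pos_of_ne_zero hn
        · exact (Polynomial.natDegree_lt_iff_degree_lt h).mpr h1
      have hsum : Polynomial.aeval M r =
          ∑ i ∈ Finset.range (Fintype.card V), r.coeff i • M ^ i :=
        Polynomial.aeval_eq_sum_range' hdeg M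
      rw [hpow, hsum, Matrix.sum_mul, vecMul_sum_aux]
      refine Finset.sum_eq_zero fun i hi => ?_
      rw [Matrix.smul_mul, vecMul_smul_mat, hlt i (Finset.mem_range.mp hi), smul_zero]

end ZFProof

theorem stmt0 [Fintype V] [DecidableEq V] {m : ℕ} (G : SimpleGraph V)
    (ℓ : Fin m → V) (hinj : Function.Injective ℓ) :
    (∀ M ∈ MatFamily G, zeta G (Set.range ℓ) ≤ (ctrbMatrix M (inputMatrix ℓ)).rank) ∧
      zeta G (Set.range ℓ) ≤ gammaSSC G ℓ := by
  classical
  have main : ∀ M ∈ MatFamily G,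
      zeta G (Set.range ℓ) ≤ (ctrbMatrix M (inputMatrix ℓ)).rank := by
    intro M hM
    set H := inputMatrix ℓ with hH
    set C := ctrbMatrix M H with hC
    set S : Set V := dset G (Set.range ℓ) with hS
    haveI : Fintype S := (Set.toFinite S).fintype
    let L : (V → ℝ) →ₗ[ℝ] (S → ℝ) := LinearMap.funLeft ℝ ℝ Subtype.val
    have hsub : LinearMap.ker (Matrix.mulVecLin Cᵀ) ≤ LinearMap.ker L := by
      intro x hx
      have hx' : Cᵀ *ᵥ x = 0 := hx
      have hv : ∀ v ∈ S, x v = 0 := fun v hv =>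
        zf_vanish G ℓ M hM hv x (ker_vanish_all M H x hx')
      have : L x = 0 := by
        funext v
        exact hv v.1 v.2
      exact this
    have h1 := LinearMap.finrank_range_add_finrank_ker (Matrix.mulVecLin Cᵀ)
    have h2 := LinearMap.finrank_range_add_finrank_ker L
    have hLsurj : Function.Surjective L :=
      LinearMap.funLeft_surjective_of_injective ℝ ℝ _ Subtype.val_injective
    have hrangeL : LinearMap.range L = ⊤ := LinearMap.range_eq_top.mpr hLsurj
    rw [hrangeL, finrank_top] at h2
    rw [Module.finrank_fintype_fun_eq_card] at h1 h2
    rw [Module.finrank_fintype_fun_eq_card] at h2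
    have hmono : Module.finrank ℝ (LinearMap.ker (Matrix.mulVecLin Cᵀ)) ≤
        Module.finrank ℝ (LinearMap.ker L) := Submodule.finrank_mono hsub
    have hz : zeta G (Set.range ℓ) = Fintype.card S := by
      rw [zeta, ← hS, ← Nat.card_coe_set_eq, Nat.card_eq_fintype_card]
    have hrank : C.rank = Module.finrank ℝ (LinearMap.range (Matrix.mulVecLin Cᵀ)) := by
      rw [← Matrix.rank_transpose C]
      rfl
    rw [hrank, hz]
    omega
  refine ⟨main, ?_⟩
  have hne : {r : ℕ | ∃ M ∈ MatFamily G, r = (ctrbMatrix M (inputMatrix ℓ)).rank}.Nonempty := by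
    refine ⟨(ctrbMatrix (Matrix.of fun i j => if G.Adj i j then (1 : ℝ) else 0)
      (inputMatrix ℓ)).rank, ⟨_, ?_, rfl⟩⟩
    constructor
    · ext i j
      simp only [Matrix.transpose_apply, Matrix.of_apply]
      by_cases h : G.Adj i j
      · rw [if_pos h, if_pos h.symm]
      · rw [if_neg h, if_neg fun h' => h h'.symm]
    · intro i j hij
      by_cases h : G.Adj i j <;> simp [h]
  obtain ⟨M, hM, hMr⟩ := Nat.sInf_mem hne
  rw [gammaSSC, hMr]
  exact main M hM
end

section
/- Let G = (V,E) be a finite simple graph with leader set V_ℓ ⊆ V, |V_ℓ| = m. Then there exists an edge set E_{B_z} ⊆ E with |E_{B_z}| = ζ(G,V_ℓ) − m such that for every graph Ĝ = (V,Ê) with E_{B_z} ⊆ Ê ⊆ E, the derived set of Ĝ contains that of G, i.e., dset(G,V_ℓ) ⊆ dset(Ĝ,V_ℓ); in particular ζ(Ĝ,V_ℓ) ≥ ζ(G,V_ℓ), so B_z = (V,E_{B_z}) is a ZFS-based backbone of G. -/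
open Matrix

variable {V : Type*}

def zstep (G : SimpleGraph V) (S : Set V) : Set V :=
  S ∪ {u | ∃ v ∈ S, G.Adj v u ∧ ∀ w, G.Adj v w → w ≠ u → w ∈ S}

def Zit (G : SimpleGraph V) (S : Set V) (n : ℕ) : Set V := (zstep G)^[n] S

lemma Zit_succ (G : SimpleGraph V) (S : Set V) (n : ℕ) :
    Zit G S (n + 1) = zstep G (Zit G S n) := Function.iterate_succ_apply' _ _ _

lemma Zit_zero (G : SimpleGraph V) (S : Set V) : Zit G S 0 = S := rfl

lemma subset_zstep (G : SimpleGraph V) (S : Set V) : S ⊆ zstep G S :=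
  Set.subset_union_left

lemma Zit_mono (G : SimpleGraph V) (S : Set V) {a b : ℕ} (h : a ≤ b) :
    Zit G S a ⊆ Zit G S b := by
  induction b with
  | zero => simp [Nat.le_zero.mp h]
  | succ n ih =>
    rcases Nat.lt_or_ge a (n + 1) with h1 | h1
    · have := ih (Nat.lt_succ_iff.mp h1)
      rw [Zit_succ]
      exact this.trans (subset_zstep _ _)
    · have : a = n + 1 := le_antisymm h h1
      subst this; exact subset_refl _

lemma Zit_subset_dset (G : SimpleGraph V) (Vl : Set V) (n : ℕ) :
    Zit G Vl n ⊆ dset G Vl := by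
  induction n with
  | zero => exact fun u hu => ZFDerived.init hu
  | succ n ih =>
    rw [Zit_succ]
    rintro u (hu | ⟨v, hv, hadj, hall⟩)
    · exact ih hu
    · exact ZFDerived.force (ih hv) hadj (fun w hw hne => ih (hall w hw hne))

lemma derived_mem_Zit [Fintype V] {G : SimpleGraph V} {Vl : Set V} {u : V}
    (hu : ZFDerived G Vl u) : ∃ n, u ∈ Zit G Vl n := by
  classical
  induction hu with
  | init h => exact ⟨0, h⟩
  | @force u v hv hadj hall ihv ihall =>
    obtain ⟨n0, hn0⟩ := ihv
    have hch : ∀ w : V, ∃ n, (G.Adj v w → w ≠ u → w ∈ Zit G Vl n) := by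
      intro w
      by_cases h : G.Adj v w ∧ w ≠ u
      · obtain ⟨n, hn⟩ := ihall w h.1 h.2
        exact ⟨n, fun _ _ => hn⟩
      · exact ⟨0, fun h1 h2 => absurd ⟨h1, h2⟩ h⟩
    choose f hf using hch
    refine ⟨max n0 (Finset.univ.sup f) + 1, ?_⟩
    rw [Zit_succ]
    refine Or.inr ⟨v, Zit_mono G Vl (le_max_left _ _) hn0, hadj, fun w hw hne =>
      Zit_mono G Vl ?_ (hf w hw hne)⟩
    exact le_trans (Finset.le_sup (Finset.mem_univ w)) (le_max_right _ _)

theorem stmt2 [Fintype V] {m : ℕ} (G : SimpleGraph V) (Vl : Set V) (hm : Vl.ncard = m) :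
    ∃ EB : Set (Sym2 V), EB ⊆ G.edgeSet ∧ EB.ncard = zeta G Vl - m ∧
      (∀ Gh : SimpleGraph V, Gh ≤ G → EB ⊆ Gh.edgeSet →
        dset G Vl ⊆ dset Gh Vl ∧ zeta G Vl ≤ zeta Gh Vl) ∧
      IsZFSBackbone G Vl EB := by
  classical
  have key : ∀ u : V, ∃ (v : V) (r : ℕ), u ∈ dset G Vl \ Vl →
      (v ∈ Zit G Vl r ∧ u ∉ Zit G Vl r ∧ G.Adj v u ∧
        (∀ w, G.Adj v w → w ≠ u → w ∈ Zit G Vl r)) := by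
    intro u
    by_cases hu : u ∈ dset G Vl \ Vl
    · have h1 : ∃ n, u ∈ Zit G Vl n := derived_mem_Zit hu.1
      have hr0 : Nat.find h1 ≠ 0 := by
        intro h0
        have := Nat.find_spec h1
        rw [h0, Zit_zero] at this
        exact hu.2 this
      obtain ⟨r, hr⟩ : ∃ r, Nat.find h1 = r + 1 := ⟨Nat.find h1 - 1, by omega⟩
      have hnot : u ∉ Zit G Vl r := Nat.find_min h1 (by omega)
      have hmem : u ∈ Zit G Vl (r + 1) := hr ▸ Nat.find_spec h1
      rw [Zit_succ] at hmem
      rcases hmem with hmem | ⟨v, hv, hadj, hall⟩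
      · exact absurd hmem hnot
      · exact ⟨v, r, fun _ => ⟨hv, hnot, hadj, hall⟩⟩
    · exact ⟨u, 0, fun h => absurd h hu⟩
  choose vv rr hkey using key
  set EB : Set (Sym2 V) := (fun u => s(vv u, u)) '' (dset G Vl \ Vl) with hEBdef
  have hVlsub : Vl ⊆ dset G Vl := fun v hv => ZFDerived.init hv
  have hEBsub : EB ⊆ G.edgeSet := by
    rintro e ⟨u, hu, rfl⟩
    exact (hkey u hu).2.2.1
  have hinj : Set.InjOn (fun u => s(vv u, u)) (dset G Vl \ Vl) := by
    intro a ha b hb heq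
    by_contra hne
    simp only [Sym2.eq_iff] at heq
    rcases heq with ⟨h1, h2⟩ | ⟨h1, h2⟩
    · exact hne h2
    · -- vv a = b, vv b = a
      obtain ⟨ha1, ha2, -, -⟩ := hkey a ha
      obtain ⟨hb1, hb2, -, -⟩ := hkey b hb
      rw [h1] at ha1  -- b ∈ Zit (rr a)
      rw [← h2] at hb1  -- a ∈ Zit (rr b)
      have hab : rr a < rr b := by
        by_contra h
        push_neg at h
        exact ha2 (Zit_mono G Vl h hb1)
      have hba : rr b < rr a := by
        by_contra h
        push_neg at h
        exact hb2 (Zit_mono G Vl h ha1)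
      omega
  have hcard : EB.ncard = zeta G Vl - m := by
    rw [hEBdef, Set.ncard_image_of_injOn hinj, Set.ncard_diff hVlsub, hm, zeta]
  have hmain : ∀ Gh : SimpleGraph V, Gh ≤ G → EB ⊆ Gh.edgeSet →
      dset G Vl ⊆ dset Gh Vl ∧ zeta G Vl ≤ zeta Gh Vl := by
    intro Gh hle hEB
    have pres : ∀ n, ∀ u, u ∈ Zit G Vl n → ZFDerived Gh Vl u := by
      intro n
      induction n using Nat.strong_induction_on with
      | _ n ih =>
        intro u hu
        by_cases hVl : u ∈ Vl
        · exact ZFDerived.init hVl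
        · have hud : u ∈ dset G Vl \ Vl := ⟨Zit_subset_dset G Vl n hu, hVl⟩
          obtain ⟨h1, h2, h3, h4⟩ := hkey u hud
          have hrn : rr u < n := by
            by_contra h
            push_neg at h
            exact h2 (Zit_mono G Vl h hu)
          have hv : ZFDerived Gh Vl (vv u) := ih _ hrn _ h1
          have hadj : Gh.Adj (vv u) u :=
            (SimpleGraph.mem_edgeSet Gh).mp (hEB ⟨u, hud, rfl⟩)
          exact ZFDerived.force hv hadj
            (fun w hw hne => ih _ hrn _ (h4 w (hle hw) hne))
    have hsub : dset G Vl ⊆ dset Gh Vl := by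
      intro u hu
      obtain ⟨n, hn⟩ := derived_mem_Zit hu
      exact pres n u hn
    exact ⟨hsub, Set.ncard_le_ncard hsub (Set.toFinite _)⟩
  exact ⟨EB, hEBsub, hcard, hmain, hEBsub, fun Gh hle hEB => (hmain Gh hle hEB).2⟩
end

section
/- Let G = (V,E) be a finite simple graph with leader set V_ℓ ⊆ V, |V_ℓ| = m. Every ZFS-based backbone B = (V,E_B) of (G,V_ℓ) with the minimum number of edges |E_B| = ζ(G,V_ℓ) − m satisfies ζ(B,V_ℓ) = ζ(G,V_ℓ), i.e., the derived set of the backbone graph itself has the same size as the derived set of G. -/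
open Matrix

variable {V : Type*}

section ZFAux

variable {V : Type*}

def stg (B : SimpleGraph V) (S : Set V) : ℕ → Set V
  | 0 => S
  | n+1 => stg B S n ∪ {u | ∃ v ∈ stg B S n, B.Adj v u ∧ ∀ w, B.Adj v w → w ≠ u → w ∈ stg B S n}

lemma stg_mono (B : SimpleGraph V) (S : Set V) : Monotone (stg B S) :=
  monotone_nat_of_le_succ fun _ => Set.subset_union_left

lemma stg_subset_dset (B : SimpleGraph V) (S : Set V) :
    ∀ n, stg B S n ⊆ dset B S
  | 0 => fun _ hv => ZFDerived.init hv
  | n+1 => by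
    rintro u (h | ⟨v, hv, hadj, hall⟩)
    · exact stg_subset_dset B S n h
    · exact ZFDerived.force (stg_subset_dset B S n hv) hadj
        (fun w hw hn => stg_subset_dset B S n (hall w hw hn))

lemma dset_exists_stg [Fintype V] (B : SimpleGraph V) (S : Set V) {u : V}
    (h : ZFDerived B S u) : ∃ n, u ∈ stg B S n := by
  classical
  induction h with
  | init hv => exact ⟨0, hv⟩
  | @force u v _ hadj _ ihv ihall =>
    set g : V → ℕ := fun x => if hx : ∃ n, x ∈ stg B S n then Nat.find hx else 0 with hg
    set N := Finset.univ.sup g with hN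
    have key : ∀ x, (∃ n, x ∈ stg B S n) → x ∈ stg B S N := by
      intro x hx
      have h1 : x ∈ stg B S (g x) := by
        simp only [hg, dif_pos hx]
        exact Nat.find_spec hx
      exact stg_mono B S (Finset.le_sup (Finset.mem_univ x)) h1
    exact ⟨N + 1, Or.inr ⟨v, key v ihv, hadj, fun w hw hn => key w (ihall w hw hn)⟩⟩

lemma dset_diff_ncard_le [Fintype V] (B : SimpleGraph V) (S : Set V) :
    (dset B S \ S).ncard ≤ B.edgeSet.ncard := by
  classical
  have hspec : ∀ u ∈ dset B S \ S, ∃ k v, v ∈ stg B S k ∧ B.Adj v u ∧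
      ∀ j, u ∈ stg B S j → k < j := by
    rintro u ⟨hu, hus⟩
    have hex : ∃ n, u ∈ stg B S n := dset_exists_stg B S hu
    set k := Nat.find hex with hk
    have hks : u ∈ stg B S k := Nat.find_spec hex
    have hkne : k ≠ 0 := by
      intro h0
      rw [h0] at hks
      exact hus hks
    obtain ⟨j, hkj⟩ := Nat.exists_eq_succ_of_ne_zero hkne
    have hnj : u ∉ stg B S j := Nat.find_min hex (by omega)
    have hks' : u ∈ stg B S (j + 1) := by
      have : k = j + 1 := hkj
      rwa [this] at hks
    rcases hks' with h | ⟨v, hv, hadj, _⟩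
    · exact absurd h hnj
    · refine ⟨j, v, hv, hadj, fun i hi => ?_⟩
      have hle : Nat.find hex ≤ i := Nat.find_le hi
      omega
  choose! k f hf1 hf2 hf3 using hspec
  set φ : V → Sym2 V := fun u => s(f u, u) with hφ
  have hmaps : ∀ u ∈ dset B S \ S, φ u ∈ B.edgeSet := fun u hu =>
    B.mem_edgeSet.mpr (hf2 u hu)
  have hinj : Set.InjOn φ (dset B S \ S) := by
    intro a ha b hb hab
    by_contra hne
    simp only [hφ, Sym2.eq_iff] at hab
    rcases hab with ⟨_, h2⟩ | ⟨h1, h2⟩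
    · exact hne h2
    · -- f a = b, a = f b
      have hba : b ∈ stg B S (k a) := h1 ▸ hf1 a ha
      have hab' : a ∈ stg B S (k b) := by rw [h2]; exact hf1 b hb
      have := hf3 b hb (k a) hba
      have := hf3 a ha (k b) hab'
      omega
  calc (dset B S \ S).ncard = (φ '' (dset B S \ S)).ncard :=
        (Set.ncard_image_of_injOn hinj).symm
    _ ≤ B.edgeSet.ncard := Set.ncard_le_ncard
        (Set.image_subset_iff.mpr hmaps) (Set.toFinite _)

end ZFAux

theorem stmt5 [Fintype V] {m : ℕ} (G : SimpleGraph V) (Vl : Set V) (hm : Vl.ncard = m)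
    (EB : Set (Sym2 V)) (hB : IsZFSBackbone G Vl EB)
    (hcard : EB.ncard = zeta G Vl - m) :
    zeta (SimpleGraph.fromEdgeSet EB) Vl = zeta G Vl := by
  classical
  set B := SimpleGraph.fromEdgeSet EB with hBdef
  have hsubG : EB ⊆ G.edgeSet := hB.1
  have hBle : B ≤ G := by
    rw [← SimpleGraph.edgeSet_subset_edgeSet, hBdef, SimpleGraph.edgeSet_fromEdgeSet]
    exact Set.diff_subset.trans hsubG
  have hEBsub : EB ⊆ B.edgeSet := by
    intro e he
    rw [hBdef, SimpleGraph.edgeSet_fromEdgeSet]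
    exact ⟨he, SimpleGraph.not_isDiag_of_mem_edgeSet G (hsubG he)⟩
  have h1 : zeta G Vl ≤ zeta B Vl := hB.2 B hBle hEBsub
  have hSdB : Vl ⊆ dset B Vl := fun _ hv => ZFDerived.init hv
  have hSdG : Vl ⊆ dset G Vl := fun _ hv => ZFDerived.init hv
  have hmle : m ≤ zeta G Vl := hm ▸ Set.ncard_le_ncard hSdG (Set.toFinite _)
  have hsplit : (dset B Vl \ Vl).ncard + Vl.ncard = zeta B Vl :=
    Set.ncard_diff_add_ncard_of_subset hSdB (Set.toFinite _)
  have hedge : B.edgeSet.ncard ≤ EB.ncard := by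
    refine Set.ncard_le_ncard ?_ (Set.toFinite _)
    rw [hBdef, SimpleGraph.edgeSet_fromEdgeSet]
    exact Set.diff_subset
  have h2 : (dset B Vl \ Vl).ncard ≤ B.edgeSet.ncard := dset_diff_ncard_le B Vl
  omega
end

section
/- Let G = (V,E) be a finite simple graph on n vertices with leader set V_ℓ ⊆ V of size m, and suppose V_ℓ is a zero forcing set of G, i.e., dset(G,V_ℓ) = V. Then there exists an edge set E_B ⊆ E with |E_B| = n − m such that for every graph Ĝ = (V,Ê) with E_B ⊆ Ê ⊆ E and every matrix M ∈ M(Ĝ), the controllability matrix has full rank: rank(C(M,H)) = n. That is, every subgraph of G containing the backbone edges is strong structurally controllable with leaders V_ℓ. -/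
open Matrix

variable {V : Type*}

/-! Record, for every vertex `u` outside the leader set, the vertex that forced it during zero
forcing. The edges `{forcer u, u}` are distinct, as the forcer of `u` turned black strictly
before `u`, so there are `n - m` of them. In a subgraph keeping these edges every force remains
valid, since a forcer can only lose white neighbours, so the leaders are still a zero forcing set.

For the rank, take `x` in the left kernel of the controllability matrix. By Cayley–Hamilton,
`x ᵥ* M ^ k` vanishes on the leaders for every `k`, and this property is stable under
`x ↦ x ᵥ* M`. At a force `v → u` the entry `(x ᵥ* M) v` reduces to `x u * M u v` with
`M u v ≠ 0`, so the zeros of `x` spread along the forces and `x = 0`. -/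

open Polynomial in
theorem Matrix.pow_mem_span_pow_lt_card {R n : Type*} [CommRing R] [Fintype n] [DecidableEq n]
    (M : Matrix n n R) (k : ℕ) :
    M ^ k ∈ Submodule.span R ((M ^ ·) '' Set.Iio (Fintype.card n)) := by
  cases subsingleton_or_nontrivial R
  · exact Subsingleton.elim 0 (M ^ k) ▸ zero_mem _
  cases isEmpty_or_nonempty n
  · exact Subsingleton.elim 0 (M ^ k) ▸ zero_mem _
  have hdeg : (X ^ k %ₘ M.charpoly).natDegree < Fintype.card n := by
    rw [← M.charpoly_natDegree_eq_dim]
    refine natDegree_modByMonic_lt _ M.charpoly_monic fun h => ?_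
    have := M.charpoly_natDegree_eq_dim
    rw [h, natDegree_one] at this
    exact Fintype.card_ne_zero this.symm
  rw [M.pow_eq_aeval_mod_charpoly, aeval_eq_sum_range' hdeg]
  exact Submodule.sum_mem _ fun i hi =>
    Submodule.smul_mem _ _ (Submodule.subset_span ⟨i, Finset.mem_range.mp hi, rfl⟩)

theorem Matrix.vecMul_pow_apply_eq_zero_of_forall_lt_card {R n : Type*} [CommRing R] [Fintype n]
    [DecidableEq n] (M : Matrix n n R) {x : n → R} {s : n}
    (h : ∀ k < Fintype.card n, (x ᵥ* M ^ k) s = 0) (k : ℕ) : (x ᵥ* M ^ k) s = 0 := by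
  suffices ∀ A ∈ Submodule.span R ((M ^ ·) '' Set.Iio (Fintype.card n)), (x ᵥ* A) s = 0 from
    this _ (M.pow_mem_span_pow_lt_card k)
  intro A hA
  induction hA using Submodule.span_induction with
  | mem _ hA => obtain ⟨i, hi, rfl⟩ := hA; exact h i hi
  | zero => simp
  | add A B _ _ hA hB => rw [vecMul_add, Pi.add_apply, hA, hB, add_zero]
  | smul c A _ hA => rw [vecMul_smul, Pi.smul_apply, hA, smul_zero]

section ZeroForcing

variable {G : SimpleGraph V} {S : Set V}

theorem ZFDerived.apply_eq_zero_of_vecMul_pow {R : Type*} [Semiring R] [NoZeroDivisors R]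
    [Fintype V] [DecidableEq V] {M : Matrix V V R}
    (hM : ∀ i j, i ≠ j → (M i j ≠ 0 ↔ G.Adj i j)) {v : V} (hv : ZFDerived G S v) (x : V → R)
    (hx : ∀ k : ℕ, ∀ s ∈ S, (x ᵥ* M ^ k) s = 0) : x v = 0 := by
  induction hv generalizing x with
  | init hs => simpa using hx 0 _ hs
  | @force u v _ hvu _ ihv ihall =>
    have hxM : (x ᵥ* M) v = 0 :=
      ihv _ fun k s hs => by simpa [vecMul_vecMul, pow_succ'] using hx (k + 1) s hs
    have hsingle : (x ᵥ* M) v = x u * M u v := by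
      refine Finset.sum_eq_single u (fun w _ hwu => ?_) (by simp)
      by_cases hwv : w = v
      · rw [hwv, ihv x hx, zero_mul]
      by_cases hvw : G.Adj v w
      · rw [ihall w hvw hwu x hx, zero_mul]
      · exact mul_eq_zero_of_right _ (not_ne_iff.mp (mt (hM w v hwv).mp fun h => hvw h.symm))
    rw [hsingle] at hxM
    exact (mul_eq_zero.mp hxM).resolve_right ((hM u v hvu.ne').mpr hvu.symm)

def zfStep (G : SimpleGraph V) (S : Set V) : Set V :=
  S ∪ {u | ∃ v ∈ S, G.Adj v u ∧ ∀ w, G.Adj v w → w ≠ u → w ∈ S}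

def zfIter (G : SimpleGraph V) (S : Set V) : ℕ → Set V
  | 0 => S
  | k + 1 => zfStep G (zfIter G S k)

theorem zfIter_mono (G : SimpleGraph V) (S : Set V) : Monotone (zfIter G S) :=
  monotone_nat_of_le_succ fun _ => Set.subset_union_left

theorem ZFDerived.exists_mem_zfIter [Finite V] {v : V} (hv : ZFDerived G S v) :
    ∃ k, v ∈ zfIter G S k := by
  induction hv with
  | init hs => exact ⟨0, hs⟩
  | @force u v _ hvu _ ihv ihall =>
    cases nonempty_fintype V
    obtain ⟨kv, hkv⟩ := ihv
    choose! k hk using ihall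
    let N := max kv (Finset.univ.sup k)
    refine ⟨N + 1, Or.inr ⟨v, zfIter_mono G S (le_max_left _ _) hkv, hvu, fun w hvw hwu => ?_⟩⟩
    exact zfIter_mono G S ((Finset.le_sup (Finset.mem_univ w)).trans (le_max_right _ _))
      (hk w hvw hwu)

structure ForcingChronology (G : SimpleGraph V) (S : Set V) where
  time : V → ℕ
  forcer : V → V
  adj_forcer : ∀ u ∉ S, G.Adj (forcer u) u
  time_forcer_lt : ∀ u ∉ S, time (forcer u) < time u
  time_lt_of_adj_forcer : ∀ u ∉ S, ∀ w, G.Adj (forcer u) w → w ≠ u → time w < time u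

theorem exists_forcingChronology [Finite V] (h : ∀ v, ZFDerived G S v) :
    Nonempty (ForcingChronology G S) := by
  classical
  have hex : ∀ v, ∃ k, v ∈ zfIter G S k := fun v => (h v).exists_mem_zfIter
  let time v := Nat.find (hex v)
  have hforcer : ∀ u ∉ S, ∃ v, G.Adj v u ∧ time v < time u ∧
      ∀ w, G.Adj v w → w ≠ u → time w < time u := by
    intro u hu
    have hspec : u ∈ zfIter G S (time u) := Nat.find_spec (hex u)
    obtain ⟨k, hk⟩ : ∃ k, time u = k + 1 :=
      Nat.exists_eq_succ_of_ne_zero fun h0 => hu (by rwa [h0] at hspec)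
    rw [hk] at hspec
    have hlt : ∀ w ∈ zfIter G S k, time w < time u := fun w hw =>
      (Nat.find_min' (hex w) hw).trans_lt (hk ▸ k.lt_succ_self)
    rcases hspec with hmem | ⟨v, hv, hvu, hw⟩
    · exact absurd (hlt u hmem) (lt_irrefl _)
    · exact ⟨v, hvu, hlt v hv, fun w hvw hwu => hlt w (hw w hvw hwu)⟩
  choose! forcer hforcer using hforcer
  exact ⟨⟨time, forcer, fun u hu => (hforcer u hu).1, fun u hu => (hforcer u hu).2.1,
    fun u hu => (hforcer u hu).2.2⟩⟩

namespace ForcingChronology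

variable (c : ForcingChronology G S)

def backbone : Set (Sym2 V) := (fun u => s(c.forcer u, u)) '' Sᶜ

theorem backbone_subset_edgeSet : c.backbone ⊆ G.edgeSet := by
  rintro _ ⟨u, hu, rfl⟩
  exact c.adj_forcer u hu

theorem ncard_backbone : c.backbone.ncard = Sᶜ.ncard := by
  refine Set.InjOn.ncard_image fun a ha b hb hab => ?_
  rcases Sym2.eq_iff.mp hab with ⟨-, hab⟩ | ⟨hfa, hfb⟩
  · exact hab
  · have hba : c.time b < c.time a := hfa ▸ c.time_forcer_lt a ha
    have hab : c.time a < c.time b := hfb ▸ c.time_forcer_lt b hb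
    exact absurd hab (lt_asymm hba)

theorem zfDerived_of_le {Gh : SimpleGraph V} (hle : Gh ≤ G) (hB : c.backbone ⊆ Gh.edgeSet)
    (u : V) : ZFDerived Gh S u := by
  induction hu : c.time u using Nat.strong_induction_on generalizing u with
  | _ t ih =>
    by_cases hS : u ∈ S
    · exact .init hS
    · refine .force (ih _ (hu ▸ c.time_forcer_lt u hS) _ rfl) (hB ⟨u, hS, rfl⟩) ?_
      exact fun w hw hwu => ih _ (hu ▸ c.time_lt_of_adj_forcer u hS w (hle hw) hwu) _ rfl

end ForcingChronology

end ZeroForcing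

theorem vecMul_ctrbMatrix_inputMatrix [Fintype V] [DecidableEq V] {m : ℕ} (M : Matrix V V ℝ)
    (ℓ : Fin m → V) (x : V → ℝ) (k : Fin (Fintype.card V)) (j : Fin m) :
    (x ᵥ* ctrbMatrix M (inputMatrix ℓ)) (k, j) = (x ᵥ* M ^ (k : ℕ)) (ℓ j) := by
  change (x ᵥ* (M ^ (k : ℕ) * inputMatrix ℓ)) j = _
  rw [← vecMul_vecMul]
  simp [vecMul, dotProduct, inputMatrix]

theorem rank_ctrbMatrix_of_forall_zfDerived [Fintype V] [DecidableEq V] {m : ℕ}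
    {G : SimpleGraph V} {ℓ : Fin m → V} {M : Matrix V V ℝ}
    (hM : ∀ i j, i ≠ j → (M i j ≠ 0 ↔ G.Adj i j)) (hZF : ∀ v, ZFDerived G (Set.range ℓ) v) :
    (ctrbMatrix M (inputMatrix ℓ)).rank = Fintype.card V := by
  refine LinearIndependent.rank_matrix (Fintype.linearIndependent_iff.mpr fun x hx => ?_)
  replace hx : x ᵥ* ctrbMatrix M (inputMatrix ℓ) = 0 := (vecMul_eq_sum x _).trans hx
  have hvanish (k : ℕ) : ∀ s ∈ Set.range ℓ, (x ᵥ* M ^ k) s = 0 := by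
    rintro _ ⟨j, rfl⟩
    refine M.vecMul_pow_apply_eq_zero_of_forall_lt_card (fun k hk => ?_) k
    rw [← vecMul_ctrbMatrix_inputMatrix M ℓ x ⟨k, hk⟩, hx, Pi.zero_apply]
  exact fun v => (hZF v).apply_eq_zero_of_vecMul_pow hM x hvanish

theorem stmt7 [Fintype V] [DecidableEq V] {m : ℕ} (G : SimpleGraph V)
    (ℓ : Fin m → V) (hinj : Function.Injective ℓ)
    (hZFS : dset G (Set.range ℓ) = Set.univ) :
    ∃ EB : Set (Sym2 V), EB ⊆ G.edgeSet ∧ EB.ncard = Fintype.card V - m ∧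
      ∀ Gh : SimpleGraph V, Gh ≤ G → EB ⊆ Gh.edgeSet →
        ∀ M ∈ MatFamily Gh, (ctrbMatrix M (inputMatrix ℓ)).rank = Fintype.card V := by
  obtain ⟨c⟩ := exists_forcingChronology (Set.eq_univ_iff_forall.mp hZFS)
  refine ⟨c.backbone, c.backbone_subset_edgeSet, ?_, fun Gh hle hB M hM => ?_⟩
  · rw [c.ncard_backbone, Set.ncard_compl, Set.ncard_range_of_injective hinj,
      Nat.card_eq_fintype_card, Nat.card_eq_fintype_card, Fintype.card_fin]
  · exact rank_ctrbMatrix_of_forall_zfDerived hM.2 (c.zfDerived_of_le hle hB)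
end

section
/- Let G = (V,E) be a finite simple graph with leader set V_ℓ = {ℓ_1,…,ℓ_m} ⊆ V, and let v_1,…,v_k ∈ V with coordinates π(1),…,π(k) ∈ {1,…,m} form a PMI sequence in G. For each i, let P_i be a shortest path in G from ℓ_{π(i)} to v_i, and let E_{B_d} = ⋃_{i=1}^{k} E(P_i). Then for every graph Ĝ = (V,Ê) with E_{B_d} ⊆ Ê ⊆ E, the same vertices v_1,…,v_k with the same coordinates π form a PMI sequence in Ĝ; in particular δ(Ĝ,V_ℓ) ≥ k, and if k = δ(G,V_ℓ) then B_d = (V,E_{B_d}) is a distance-based backbone of G. -/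
open Matrix

variable {V : Type*}

lemma pmi_card_le [Fintype V] {m : ℕ} {G : SimpleGraph V} {ℓ : Fin m → V} {k : ℕ}
    {v : Fin k → V} {π : Fin k → Fin m} (h : IsPMI G ℓ v π) :
    k ≤ m * Fintype.card V := by
  classical
  have hdlt : ∀ i : Fin k, G.dist (ℓ (π i)) (v i) < Fintype.card V := by
    intro i
    obtain ⟨p, hp⟩ := (SimpleGraph.reachable_of_edist_ne_top (h i).1).exists_walk_length_eq_dist
    calc G.dist (ℓ (π i)) (v i) ≤ p.bypass.length := SimpleGraph.dist_le _
      _ < Fintype.card V := p.bypass_isPath.length_lt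
  let f : Fin k → Fin m × Fin (Fintype.card V) :=
    fun i => (π i, ⟨G.dist (ℓ (π i)) (v i), hdlt i⟩)
  have hinj : Function.Injective f := by
    intro i j hij
    by_contra hne
    rcases lt_or_gt_of_ne (fun h' : i = j => hne h') with hlt | hlt
    · have h1 := (h i).2 j hlt
      have hpij : π i = π j := congrArg Prod.fst hij
      have hd : G.dist (ℓ (π i)) (v i) = G.dist (ℓ (π i)) (v j) := by
        have := congrArg (fun x => (x.2 : ℕ)) hij
        simpa [f, hpij] using this
      have hij' : G.edist (ℓ (π i)) (v i) = G.edist (ℓ (π i)) (v j) := by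
        have h1t := (h i).1
        have h2t : G.edist (ℓ (π i)) (v j) ≠ ⊤ := hpij ▸ (h j).1
        rw [← ENat.coe_toNat h1t, ← ENat.coe_toNat h2t]
        exact_mod_cast hd
      exact absurd h1 (by simp [hij'])
    · have h1 := (h j).2 i hlt
      have hpij : π i = π j := congrArg Prod.fst hij
      have hd : G.dist (ℓ (π j)) (v j) = G.dist (ℓ (π j)) (v i) := by
        have := congrArg (fun x => (x.2 : ℕ)) hij
        simpa [f, hpij] using this.symm
      have hij' : G.edist (ℓ (π j)) (v j) = G.edist (ℓ (π j)) (v i) := by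
        have h1t := (h j).1
        have h2t : G.edist (ℓ (π j)) (v i) ≠ ⊤ := hpij ▸ (h i).1
        rw [← ENat.coe_toNat h1t, ← ENat.coe_toNat h2t]
        exact_mod_cast hd
      exact absurd h1 (by simp [hij'])
  calc k = Fintype.card (Fin k) := (Fintype.card_fin k).symm
    _ ≤ Fintype.card (Fin m × Fin (Fintype.card V)) := Fintype.card_le_of_injective f hinj
    _ = m * Fintype.card V := by simp

theorem stmt8 [Fintype V] {m : ℕ} (G : SimpleGraph V) (ℓ : Fin m → V) {k : ℕ}
    (v : Fin k → V) (π : Fin k → Fin m) (hPMI : IsPMI G ℓ v π)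
    (P : (i : Fin k) → G.Walk (ℓ (π i)) (v i))
    (hpath : ∀ i, (P i).IsPath)
    (hshort : ∀ i, (P i).length = G.dist (ℓ (π i)) (v i)) :
    (∀ Gh : SimpleGraph V, Gh ≤ G → (⋃ i, {e | e ∈ (P i).edges}) ⊆ Gh.edgeSet →
        IsPMI Gh ℓ v π ∧ k ≤ deltaPMI Gh ℓ) ∧
      (k = deltaPMI G ℓ → IsDistBackbone G ℓ (⋃ i, {e | e ∈ (P i).edges})) := by
  have main : ∀ Gh : SimpleGraph V, Gh ≤ G → (⋃ i, {e | e ∈ (P i).edges}) ⊆ Gh.edgeSet →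
      IsPMI Gh ℓ v π ∧ k ≤ deltaPMI Gh ℓ := by
    intro Gh hle hsub
    have hedge : ∀ i : Fin k, ∀ e ∈ (P i).edges, e ∈ Gh.edgeSet := by
      intro i e he
      exact hsub (Set.mem_iUnion.mpr ⟨i, he⟩)
    have hed : ∀ i : Fin k, Gh.edist (ℓ (π i)) (v i) = G.edist (ℓ (π i)) (v i) := by
      intro i
      refine le_antisymm ?_ (SimpleGraph.edist_anti hle)
      calc Gh.edist (ℓ (π i)) (v i) ≤ ((P i).transfer Gh (hedge i)).length :=
            SimpleGraph.edist_le _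
        _ = ((P i).length : ℕ∞) := by rw [SimpleGraph.Walk.length_transfer]
        _ = (G.dist (ℓ (π i)) (v i) : ℕ∞) := by exact_mod_cast hshort i
        _ = G.edist (ℓ (π i)) (v i) := by
            simpa [SimpleGraph.dist] using ENat.coe_toNat (hPMI i).1
    have hPMI' : IsPMI Gh ℓ v π := by
      intro i
      constructor
      · rw [hed i]; exact (hPMI i).1
      · intro j hij
        calc Gh.edist (ℓ (π i)) (v i) = G.edist (ℓ (π i)) (v i) := hed i
          _ < G.edist (ℓ (π i)) (v j) := (hPMI i).2 j hij
          _ ≤ Gh.edist (ℓ (π i)) (v j) := SimpleGraph.edist_anti hle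
    refine ⟨hPMI', ?_⟩
    have hmem : k ∈ {k : ℕ | ∃ (v : Fin k → V) (π : Fin k → Fin m), IsPMI Gh ℓ v π} :=
      ⟨v, π, hPMI'⟩
    have hbdd : BddAbove {k : ℕ | ∃ (v : Fin k → V) (π : Fin k → Fin m), IsPMI Gh ℓ v π} :=
      ⟨m * Fintype.card V, fun n ⟨v', π', h'⟩ => pmi_card_le h'⟩
    exact le_csSup hbdd hmem
  refine ⟨main, fun hk => ⟨?_, ?_⟩⟩
  · intro e he
    obtain ⟨i, hi⟩ := Set.mem_iUnion.mp he
    exact (P i).edges_subset_edgeSet hi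
  · intro Gh hle hsub
    exact hk ▸ (main Gh hle hsub).2
end

section
/- Let G = (V,E) be a finite simple graph, Ĝ = (V,Ê) a spanning subgraph of G (Ê ⊆ E), and V_ℓ = {ℓ_1,…,ℓ_m} ⊆ V a leader set. Suppose v_1,…,v_k with coordinates π(1),…,π(k) form a PMI sequence in G, and suppose that for every i the distance from ℓ_{π(i)} to v_i is preserved in Ĝ, i.e., d_Ĝ(ℓ_{π(i)}, v_i) = d_G(ℓ_{π(i)}, v_i). Then v_1,…,v_k with the same coordinates π form a PMI sequence in Ĝ. -/
open Matrix

variable {V : Type*}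

theorem stmt9 [Fintype V] {m : ℕ} (G Gh : SimpleGraph V) (hsub : Gh ≤ G)
    (ℓ : Fin m → V) {k : ℕ} (v : Fin k → V) (π : Fin k → Fin m)
    (hPMI : IsPMI G ℓ v π)
    (hdist : ∀ i, Gh.edist (ℓ (π i)) (v i) = G.edist (ℓ (π i)) (v i)) :
    IsPMI Gh ℓ v π := by
  intro i
  obtain ⟨hfin, hlt⟩ := hPMI i
  refine ⟨by rw [hdist i]; exact hfin, fun j hij => ?_⟩
  calc Gh.edist (ℓ (π i)) (v i) = G.edist (ℓ (π i)) (v i) := hdist i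
    _ < G.edist (ℓ (π i)) (v j) := hlt j hij
    _ ≤ Gh.edist (ℓ (π i)) (v j) := SimpleGraph.edist_anti hsub
end

section
/- Let H = (V,E) be a finite simple graph with leader set V_ℓ ⊆ V, |V_ℓ| = m. Then every PMI sequence of vertices of H has length at most m + |E|; in particular δ(H,V_ℓ) ≤ m + |E|. -/
open Matrix

variable {V : Type*}

/-!
Each vertex `v i` of a PMI sequence that is not its own leader has a neighbour `p i` strictly
closer to that leader. Sending `i` to the leader index `π i` when `v i = ℓ (π i)` and to the edge
`s(p i, v i)` otherwise is injective: the distances from `ℓ (π i)` strictly increase along the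
sequence, so no later vertex can equal `v i` or `p i`.
-/

namespace SimpleGraph

variable {G : SimpleGraph V}

lemma exists_adj_edist_lt {a v : V} (hne : a ≠ v) (htop : G.edist a v ≠ ⊤) :
    ∃ u, G.Adj u v ∧ G.edist a u < G.edist a v := by
  obtain ⟨p, hp⟩ := exists_walk_of_edist_ne_top htop
  have hp_nil : ¬p.Nil := Walk.not_nil_of_ne hne
  refine ⟨p.penultimate, Walk.adj_penultimate hp_nil, ?_⟩
  calc G.edist a p.penultimate ≤ p.dropLast.length := edist_le _
    _ < p.length := by
      rw [← Walk.length_dropLast_add_one hp_nil]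
      exact_mod_cast Nat.lt_succ_self _
    _ = G.edist a v := hp

end SimpleGraph

namespace IsPMI

variable {G : SimpleGraph V} {m k : ℕ} {ℓ : Fin m → V} {v : Fin k → V} {π : Fin k → Fin m}

lemma ne_of_edist_le (h : IsPMI G ℓ v π) {i j : Fin k} (hij : i < j) {u : V}
    (hu : G.edist (ℓ (π i)) u ≤ G.edist (ℓ (π i)) (v i)) : v j ≠ u := by
  rintro rfl
  exact (hu.trans_lt ((h i).2 j hij)).false

lemma injective (h : IsPMI G ℓ v π) : Function.Injective v := by
  intro i j hij
  by_contra hne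
  rcases lt_or_gt_of_ne hne with hlt | hlt
  · exact h.ne_of_edist_le hlt le_rfl hij.symm
  · exact h.ne_of_edist_le hlt le_rfl hij

lemma le_add_ncard_edgeSet [Finite G.edgeSet] (h : IsPMI G ℓ v π) :
    k ≤ m + G.edgeSet.ncard := by
  have hparent : ∀ i, v i ≠ ℓ (π i) →
      ∃ u, G.Adj u (v i) ∧ G.edist (ℓ (π i)) u < G.edist (ℓ (π i)) (v i) :=
    fun i hi => G.exists_adj_edist_lt (Ne.symm hi) (h i).1
  choose p hp_adj hp_lt using hparent
  classical
  let f : Fin k → Fin m ⊕ G.edgeSet := fun i =>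
    if hi : v i = ℓ (π i) then .inl (π i) else .inr ⟨s(p i hi, v i), hp_adj i hi⟩
  have not_lt_of_eq : ∀ i j, f i = f j → ¬i < j := by
    intro i j hf hij
    by_cases hi : v i = ℓ (π i) <;> by_cases hj : v j = ℓ (π j) <;>
      simp only [f, hi, hj, dite_true, dite_false, reduceCtorEq, Sum.inl.injEq,
        Sum.inr.injEq] at hf
    · exact hij.ne (h.injective (by rw [hi, hj, hf]))
    · rcases Sym2.eq_iff.mp (congrArg Subtype.val hf) with ⟨-, hv⟩ | ⟨hpv, -⟩
      · exact hij.ne (h.injective hv)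
      · exact h.ne_of_edist_le hij (hp_lt i hi).le hpv.symm
  have hf : Function.Injective f := fun i j hfij =>
    le_antisymm (not_lt.mp (not_lt_of_eq j i hfij.symm)) (not_lt.mp (not_lt_of_eq i j hfij))
  simpa [Nat.card_sum, Nat.card_coe_set_eq] using Nat.card_le_card_of_injective f hf

end IsPMI

theorem stmt12_general [Fintype V] {m : ℕ} (H : SimpleGraph V) (ℓ : Fin m → V) :
    (∀ (k : ℕ) (v : Fin k → V) (π : Fin k → Fin m), IsPMI H ℓ v π →
        k ≤ m + H.edgeSet.ncard) ∧
      deltaPMI H ℓ ≤ m + H.edgeSet.ncard := by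
  have hlen : ∀ (k : ℕ) (v : Fin k → V) (π : Fin k → Fin m), IsPMI H ℓ v π →
      k ≤ m + H.edgeSet.ncard := fun _ _ _ h => h.le_add_ncard_edgeSet
  exact ⟨hlen, csSup_le' fun _ ⟨v, π, h⟩ => hlen _ v π h⟩

theorem stmt12 [Fintype V] {m : ℕ} (H : SimpleGraph V) (ℓ : Fin m → V)
    (hinj : Function.Injective ℓ) :
    (∀ (k : ℕ) (v : Fin k → V) (π : Fin k → Fin m), IsPMI H ℓ v π →
        k ≤ m + H.edgeSet.ncard) ∧
      deltaPMI H ℓ ≤ m + H.edgeSet.ncard :=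
  stmt12_general H ℓ
end

section
/- Let G = (V,E) be a finite simple graph on n vertices with leader set V_ℓ ⊆ V, |V_ℓ| = m. Then there exists an edge set E_{B_z} ⊆ E with |E_{B_z}| = ζ(G,V_ℓ) − m such that for every graph Ĝ = (V,Ê) with E_{B_z} ⊆ Ê ⊆ E and every matrix M ∈ M(Ĝ), rank(C(M,H)) ≥ ζ(G,V_ℓ); that is, every subgraph of G containing the ZFS-based backbone has dimension of strong structurally controllable subspace at least ζ(G,V_ℓ). -/
open Matrix

variable {V : Type*}

section AuxZF
variable {V : Type*}

def ZF (G : SimpleGraph V) (S : Set V) : ℕ → V → Prop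
  | 0, v => v ∈ S
  | (k+1), u => ZF G S k u ∨ ∃ v, G.Adj v u ∧ ZF G S k v ∧ ∀ w, G.Adj v w → w ≠ u → ZF G S k w

lemma ZF_mono {G : SimpleGraph V} {S : Set V} {u : V} {k k' : ℕ} (h : k ≤ k')
    (hk : ZF G S k u) : ZF G S k' u := by
  induction k', h using Nat.le_induction with
  | base => exact hk
  | succ n hn ih => exact Or.inl ih

lemma ZF_derived {G : SimpleGraph V} {S : Set V} {u : V} {k : ℕ} (h : ZF G S k u) :
    ZFDerived G S u := by
  induction k generalizing u with
  | zero => exact .init h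
  | succ k ih =>
    rcases h with h | ⟨v, hadj, hv, hside⟩
    · exact ih h
    · exact .force (ih hv) hadj (fun w hw hne => ih (hside w hw hne))

lemma derived_ZF [Fintype V] {G : SimpleGraph V} {S : Set V} {u : V}
    (h : ZFDerived G S u) : ∃ k, ZF G S k u := by
  classical
  induction h with
  | init hv => exact ⟨0, hv⟩
  | @force u v hv hadj hside ihv ihside =>
    obtain ⟨kv, hkv⟩ := ihv
    choose f hf using ihside
    set g : V → ℕ := fun w => if h : G.Adj v w ∧ w ≠ u then f w h.1 h.2 else 0 with hg
    refine ⟨max kv (Finset.univ.sup g) + 1, Or.inr ⟨v, hadj, ZF_mono (le_max_left _ _) hkv,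
      fun w hw hne => ZF_mono ?_ (hf w hw hne)⟩⟩
    have h1 : f w hw hne = g w := by simp [hg, dif_pos (And.intro hw hne)]
    rw [h1]
    exact le_trans (Finset.le_sup (Finset.mem_univ w)) (le_max_right _ _)

noncomputable def fuel (G : SimpleGraph V) (S : Set V) (u : V) : ℕ := sInf {k | ZF G S k u}

lemma fuel_spec [Fintype V] {G : SimpleGraph V} {S : Set V} {u : V} (h : ZFDerived G S u) :
    ZF G S (fuel G S u) u := Nat.sInf_mem (derived_ZF h)

lemma fuel_le {G : SimpleGraph V} {S : Set V} {u : V} {k : ℕ} (h : ZF G S k u) :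
    fuel G S u ≤ k := Nat.sInf_le h

lemma exists_parent [Fintype V] {G : SimpleGraph V} {S : Set V} {u : V}
    (hu : ZFDerived G S u) (hus : u ∉ S) :
    ∃ v, G.Adj v u ∧ ZFDerived G S v ∧ fuel G S v < fuel G S u ∧
      ∀ w, G.Adj v w → w ≠ u → (ZFDerived G S w ∧ fuel G S w < fuel G S u) := by
  have hZ := fuel_spec hu
  cases hfu : fuel G S u with
  | zero => rw [hfu] at hZ; exact absurd hZ hus
  | succ k =>
    rw [hfu] at hZ
    rcases hZ with h | ⟨v, hadj, hv, hside⟩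
    · have := fuel_le h; omega
    · refine ⟨v, hadj, ZF_derived hv, by have := fuel_le hv; omega, fun w hw hne => ?_⟩
      exact ⟨ZF_derived (hside w hw hne), by have := fuel_le (hside w hw hne); omega⟩

end AuxZF

section AuxLA
variable {V : Type*} [Fintype V] [DecidableEq V]

lemma sum_mulVec' {ι : Type*} (s : Finset ι) (A : ι → Matrix V V ℝ) (v : V → ℝ) :
    (∑ i ∈ s, A i) *ᵥ v = ∑ i ∈ s, A i *ᵥ v := by
  ext t
  simp [Matrix.mulVec, dotProduct, Matrix.sum_apply, Finset.sum_mul]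
  rw [Finset.sum_comm]

lemma charpoly_pow_card (M : Matrix V V ℝ) :
    M ^ (Fintype.card V) =
      ∑ i ∈ Finset.range (Fintype.card V), (-(M.charpoly.coeff i)) • M ^ i := by
  have h0 : (Polynomial.aeval M) M.charpoly = 0 := Matrix.aeval_self_charpoly M
  rw [Polynomial.aeval_eq_sum_range, Matrix.charpoly_natDegree_eq_dim,
    Finset.sum_range_succ] at h0
  have hc : M.charpoly.coeff (Fintype.card V) = 1 := by
    rw [← Matrix.charpoly_natDegree_eq_dim M]
    exact (Matrix.charpoly_monic M).coeff_natDegree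
  rw [hc, one_smul] at h0
  have := eq_neg_of_add_eq_zero_right h0
  rw [this, ← Finset.sum_neg_distrib]
  exact Finset.sum_congr rfl (fun i _ => by rw [neg_smul])

-- key membership lemma
lemma single_mem_span {m : ℕ} (Gh : SimpleGraph V) (ℓ : Fin m → V) (M : Matrix V V ℝ)
    (hM : M ∈ MatFamily Gh) {u : V}
    (hu : ZFDerived Gh (Set.range ℓ) u) :
    Pi.single u (1:ℝ) ∈ Submodule.span ℝ (Set.range (ctrbMatrix M (inputMatrix ℓ))ᵀ) := by
  classical
  set n := Fintype.card V with hn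
  set W := Submodule.span ℝ (Set.range (ctrbMatrix M (inputMatrix ℓ))ᵀ) with hW
  have hcol : ∀ (k : Fin n) (j : Fin m),
      (ctrbMatrix M (inputMatrix ℓ))ᵀ (k, j) = (M ^ (k : ℕ)) *ᵥ Pi.single (ℓ j) 1 := by
    intro k j
    ext i
    simp [ctrbMatrix, Matrix.transpose_apply, Matrix.mul_apply, Matrix.mulVec,
      dotProduct, inputMatrix, Pi.single_apply, eq_comm]
  have hnpos : 0 < n := Fintype.card_pos_iff.2 ⟨u⟩
  have gen_mem : ∀ (k : ℕ), k < n → ∀ j : Fin m, (M ^ k) *ᵥ Pi.single (ℓ j) 1 ∈ W := by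
    intro k hk j
    rw [← hcol ⟨k, hk⟩ j]
    exact Submodule.subset_span ⟨(⟨k, hk⟩, j), rfl⟩
  have pow_mem : ∀ (k : ℕ) (j : Fin m), (M ^ k) *ᵥ Pi.single (ℓ j) 1 ∈ W := by
    intro k
    induction k using Nat.strong_induction_on with
    | _ k ih =>
      intro j
      by_cases hk : k < n
      · exact gen_mem k hk j
      · push_neg at hk
        have hkk : k - n + n = k := Nat.sub_add_cancel hk
        have hMk : M ^ k = ∑ i ∈ Finset.range n, (-(M.charpoly.coeff i)) • M ^ (k - n + i) := by
          conv_lhs => rw [← hkk, pow_add, charpoly_pow_card M, Finset.mul_sum]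
          exact Finset.sum_congr rfl (fun i _ => by rw [mul_smul_comm, ← pow_add])
        rw [hMk, sum_mulVec']
        refine Submodule.sum_mem _ (fun i hi => ?_)
        rw [Matrix.smul_mulVec]
        refine Submodule.smul_mem _ _ (ih (k - n + i) ?_ j)
        have := Finset.mem_range.1 hi
        omega
  have mulVec_mem : ∀ x ∈ W, M *ᵥ x ∈ W := by
    intro x hx
    induction hx using Submodule.span_induction with
    | mem y hy =>
      obtain ⟨⟨k, j⟩, rfl⟩ := hy
      rw [hcol k j, Matrix.mulVec_mulVec, ← pow_succ']
      exact pow_mem _ j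
    | zero => rw [Matrix.mulVec_zero]; exact Submodule.zero_mem _
    | add y z _ _ hy hz => rw [Matrix.mulVec_add]; exact Submodule.add_mem _ hy hz
    | smul a y _ hy => rw [Matrix.mulVec_smul]; exact Submodule.smul_mem _ _ hy
  induction hu with
  | init hv =>
    obtain ⟨j, rfl⟩ := hv
    have := gen_mem 0 hnpos j
    rwa [pow_zero, Matrix.one_mulVec] at this
  | @force u' v hv hadj hside ihv ihside =>
    have hMv : M *ᵥ Pi.single v (1:ℝ) ∈ W := mulVec_mem _ ihv
    have hexp : M *ᵥ Pi.single v (1:ℝ) = ∑ t : V, M t v • (Pi.single t 1 : V → ℝ) := by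
      ext s
      simp [Matrix.mulVec_single, Finset.sum_apply, Pi.single_apply]
    have hsum : M u' v • (Pi.single u' 1 : V → ℝ)
        = (M *ᵥ Pi.single v (1:ℝ)) - ∑ t ∈ Finset.univ.erase u', M t v • (Pi.single t 1 : V → ℝ) := by
      rw [hexp, ← Finset.add_sum_erase _ _ (Finset.mem_univ u')]
      abel
    have hmem : M u' v • (Pi.single u' 1 : V → ℝ) ∈ W := by
      rw [hsum]
      refine Submodule.sub_mem _ hMv (Submodule.sum_mem _ (fun t ht => ?_))
      have htu : t ≠ u' := Finset.ne_of_mem_erase ht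
      by_cases htv : t = v
      · subst htv; exact Submodule.smul_mem _ _ ihv
      · by_cases hadj' : Gh.Adj v t
        · exact Submodule.smul_mem _ _ (ihside t hadj' htu)
        · have : M t v = 0 := by
            by_contra h
            exact hadj' (((hM.2 t v htv).1 h).symm)
          rw [this, zero_smul]
          exact Submodule.zero_mem _
    have hMuv : M u' v ≠ 0 := (hM.2 u' v hadj.ne').2 hadj.symm
    have : Pi.single u' (1:ℝ) = (M u' v)⁻¹ • (M u' v • (Pi.single u' 1 : V → ℝ)) := by
      rw [smul_smul, inv_mul_cancel₀ hMuv, one_smul]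
    rw [this]
    exact Submodule.smul_mem _ _ hmem

end AuxLA

theorem stmt15 [Fintype V] [DecidableEq V] {m : ℕ} (G : SimpleGraph V)
    (ℓ : Fin m → V) (hinj : Function.Injective ℓ) :
    ∃ EB : Set (Sym2 V), EB ⊆ G.edgeSet ∧ EB.ncard = zeta G (Set.range ℓ) - m ∧
      ∀ Gh : SimpleGraph V, Gh ≤ G → EB ⊆ Gh.edgeSet →
        ∀ M ∈ MatFamily Gh, zeta G (Set.range ℓ) ≤ (ctrbMatrix M (inputMatrix ℓ)).rank := by
  classical
  set S := Set.range ℓ with hS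
  set D := dset G S with hD
  have hSD : S ⊆ D := fun v hv => ZFDerived.init hv
  have hpar0 : ∀ u, u ∈ D → u ∉ S → ∃ v, G.Adj v u ∧ ZFDerived G S v ∧
      fuel G S v < fuel G S u ∧
      ∀ w, G.Adj v w → w ≠ u → (ZFDerived G S w ∧ fuel G S w < fuel G S u) :=
    fun u hu hus => exists_parent hu hus
  choose! par hadj hpderiv hpfuel hpside using hpar0
  refine ⟨(fun u => s(par u, u)) '' (D \ S), ?_, ?_, ?_⟩
  · rintro e ⟨u, hu, rfl⟩
    exact (G.mem_edgeSet).2 (hadj u hu.1 hu.2)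
  · have hinjOn : Set.InjOn (fun u => s(par u, u)) (D \ S) := by
      intro a ha b hb hab
      rw [Sym2.eq_iff] at hab
      rcases hab with ⟨h1, h2⟩ | ⟨h1, h2⟩
      · exact h2
      · have f1 := hpfuel a ha.1 ha.2
        have f2 := hpfuel b hb.1 hb.2
        rw [h1] at f1; rw [← h2] at f2; omega
    have hSm : S.ncard = m := by
      rw [hS, ← Nat.card_coe_set_eq, Nat.card_congr (Equiv.ofInjective ℓ hinj).symm,
        Nat.card_eq_fintype_card, Fintype.card_fin]
    rw [Set.ncard_image_of_injOn hinjOn, Set.ncard_diff hSD, hSm]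
    rfl
  · intro Gh hle hEBh M hM
    have hmono : ∀ N u, u ∈ D → fuel G S u = N → ZFDerived Gh S u := by
      intro N
      induction N using Nat.strong_induction_on with
      | _ N ih =>
        intro u hu hfu
        by_cases hus : u ∈ S
        · exact ZFDerived.init hus
        · have hE : s(par u, u) ∈ Gh.edgeSet := hEBh ⟨u, ⟨hu, hus⟩, rfl⟩
          have hAdj : Gh.Adj (par u) u := (Gh.mem_edgeSet).1 hE
          refine ZFDerived.force ?_ hAdj ?_
          · exact ih (fuel G S (par u)) (hfu ▸ hpfuel u hu hus) (par u) (hpderiv u hu hus) rfl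
          · intro w hw hne
            have hwG : G.Adj (par u) w := hle hw
            obtain ⟨hwD, hwf⟩ := hpside u hu hus w hwG hne
            exact ih (fuel G S w) (hfu ▸ hwf) w hwD rfl
    set W := Submodule.span ℝ (Set.range (ctrbMatrix M (inputMatrix ℓ))ᵀ) with hW
    have hsingle : ∀ u ∈ D, (Pi.single u 1 : V → ℝ) ∈ W :=
      fun u hu => single_mem_span Gh ℓ M hM (hmono (fuel G S u) u hu rfl)
    haveI : Fintype ↥D := (Set.toFinite D).fintype
    have li : LinearIndependent ℝ (fun u : ↥D => (Pi.single (u : V) 1 : V → ℝ)) := by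
      have h2 := (Pi.basisFun ℝ V).linearIndependent.comp (Subtype.val : ↥D → V)
        Subtype.val_injective
      simpa [Function.comp_def] using h2
    have hspan : Submodule.span ℝ (Set.range fun u : ↥D => (Pi.single (u : V) 1 : V → ℝ)) ≤ W :=
      Submodule.span_le.2 (by rintro _ ⟨u, rfl⟩; exact hsingle u u.2)
    have hcard : Fintype.card ↥D ≤ Module.finrank ℝ W := by
      rw [← finrank_span_eq_card li]
      exact Submodule.finrank_mono hspan
    rw [Matrix.rank_eq_finrank_span_cols]
    calc zeta G S = D.ncard := rfl
      _ = Fintype.card ↥D := by rw [← Nat.card_coe_set_eq, Nat.card_eq_fintype_card]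
      _ ≤ _ := hcard
end
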